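/- Let G be a graph that is an odd cycle C = v_1 ... v_k (with attached triangles determining types) containing at least one vertex of Type 4, such that between every pair of consecutive Type-4 vertices along C there is exactly one vertex of Type 0 and all remaining vertices are of Type 1 (no vertices of Type 2 or 3). Then G is not a contact B0-VPG graph. -/

import Mathlib

/-- An axis-parallel nontrivial segment on the grid: `horiz` tells its direction,
`coord` is the fixed coordinate (the `y`-coordinate if horizontal, the `x`-coordinate
if vertical) and `[lo, hi]` (with `lo < hi`, i.e. the segment is nontrivial) is the
interval spanned by the varying coordinate. -/
structure GridSeg where
  horiz : Bool
  coord : ℤ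
  lo : ℤ
  hi : ℤ
  lt : lo < hi

namespace GridSeg

/-- The set of points (in the real plane) of a grid segment. -/
def pts (s : GridSeg) : Set (ℝ × ℝ) :=
  if s.horiz then {p | p.2 = (s.coord : ℝ) ∧ (s.lo : ℝ) ≤ p.1 ∧ p.1 ≤ (s.hi : ℝ)}
  else {p | p.1 = (s.coord : ℝ) ∧ (s.lo : ℝ) ≤ p.2 ∧ p.2 ≤ (s.hi : ℝ)}

/-- The interior of a grid segment. -/
def interior (s : GridSeg) : Set (ℝ × ℝ) :=
  if s.horiz then {p | p.2 = (s.coord : ℝ) ∧ (s.lo : ℝ) < p.1 ∧ p.1 < (s.hi : ℝ)}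
  else {p | p.1 = (s.coord : ℝ) ∧ (s.lo : ℝ) < p.2 ∧ p.2 < (s.hi : ℝ)}

/-- The two endpoints of a grid segment. -/
def ends (s : GridSeg) : Set (ℝ × ℝ) :=
  if s.horiz then {((s.lo : ℝ), (s.coord : ℝ)), ((s.hi : ℝ), (s.coord : ℝ))}
  else {((s.coord : ℝ), (s.lo : ℝ)), ((s.coord : ℝ), (s.hi : ℝ))}

/-- Two segments touch if they share a point which is an endpoint of at least
one of the two segments. -/
def Touch (s t : GridSeg) : Prop :=
  ∃ p : ℝ × ℝ, p ∈ s.pts ∧ p ∈ t.pts ∧ (p ∈ s.ends ∨ p ∈ t.ends)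

end GridSeg

/-- `f` is a contact B₀-VPG representation of `G`: the segments of distinct vertices are
interiorly disjoint, and two distinct vertices are adjacent iff their segments touch. -/
def IsB0Rep {V : Type*} (G : SimpleGraph V) (f : V → GridSeg) : Prop :=
  (∀ v w : V, v ≠ w → Disjoint (GridSeg.interior (f v)) (GridSeg.interior (f w))) ∧
  (∀ v w : V, v ≠ w → (G.Adj v w ↔ GridSeg.Touch (f v) (f w)))

/-- A graph is contact B₀-VPG if it admits a contact B₀-VPG representation. -/
def ContactB0VPG {V : Type*} (G : SimpleGraph V) : Prop :=
  ∃ f : V → GridSeg, IsB0Rep G f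

/-- Cyclic shift: the element `i + m (mod k)` of `Fin k`. -/
def cycShift {k : ℕ} (i : Fin k) (m : ℕ) : Fin k :=
  i + ⟨m % k, Nat.mod_lt m (Nat.lt_of_le_of_lt (Nat.zero_le i.1) i.isLt)⟩

/-- `c` lists the vertices of an induced cycle (a hole, when `k ≥ 4`) of `G`, in cyclic
order: `c` is injective and two of its vertices are adjacent iff they are consecutive. -/
def IsInducedCycle {V : Type*} (G : SimpleGraph V) {k : ℕ} (c : Fin k → V) : Prop :=
  Function.Injective c ∧
    ∀ i j : Fin k, G.Adj (c i) (c j) ↔ (i ≠ j ∧ (i = cycShift j 1 ∨ j = cycShift i 1))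

/-- The graph made of a `k`-cycle `v_1 … v_k` together with, for each `i`, `t i` pairwise
anticomplete triangles complete to `v_i` (and anticomplete to the rest of the graph).
Vertices: `Sum.inl i` is the cycle vertex `v_i`; `Sum.inr ⟨i, a, x⟩` is the `x`-th vertex
of the `a`-th triangle attached to `v_i`. -/
def cycleWithTriangles (k : ℕ) (t : Fin k → ℕ) :
    SimpleGraph (Fin k ⊕ Σ i : Fin k, Fin (t i) × Fin 3) where
  Adj a b :=
    match a, b with
    | Sum.inl i, Sum.inl j => i ≠ j ∧ (i = cycShift j 1 ∨ j = cycShift i 1)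
    | Sum.inl i, Sum.inr x => i = x.1
    | Sum.inr x, Sum.inl i => i = x.1
    | Sum.inr x, Sum.inr y => x.1 = y.1 ∧ x.2.1.1 = y.2.1.1 ∧ x.2.2 ≠ y.2.2
  symm := by
    constructor
    rintro (i | x) (j | y) h
    · exact ⟨h.1.symm, h.2.symm⟩
    · exact h
    · exact h
    · exact ⟨h.1.symm, h.2.1.symm, h.2.2.symm⟩
  loopless := by
    constructor
    rintro (i | x) h
    · exact h.1 rfl
    · exact h.2.2 rfl

/-!
In a contact representation the `k` cycle vertices own `2k` segment endpoints. Three pairwise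
touching segments cannot all meet a fourth one in its interior, so every triangle attached to
`v_i` contains an endpoint of the segment of `v_i`. Every cycle edge is a contact at an endpoint
of one of its two segments, and since `k` is odd two consecutive cycle segments are parallel, so
their contact is an endpoint of both. No endpoint serves twice, whence
`(number of triangles) + k + 1 ≤ 2k`; but between consecutive Type-4 vertices the Type-4 vertex
makes up for the single Type-0 vertex, so there are at least `k` triangles.
-/

namespace GridSeg

def across (s : GridSeg) (p : ℝ × ℝ) : ℝ := if s.horiz then p.2 else p.1

def along (s : GridSeg) (p : ℝ × ℝ) : ℝ := if s.horiz then p.1 else p.2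

def mkPoint (s : GridSeg) (a v : ℝ) : ℝ × ℝ := if s.horiz then (v, a) else (a, v)

def endpoint (s : GridSeg) (b : Bool) : ℝ × ℝ := s.mkPoint s.coord (if b then s.hi else s.lo)

variable {s t : GridSeg} {p : ℝ × ℝ}

@[simp] lemma across_mkPoint (a v : ℝ) : s.across (s.mkPoint a v) = a := by
  unfold across mkPoint; cases s.horiz <;> rfl

@[simp] lemma along_mkPoint (a v : ℝ) : s.along (s.mkPoint a v) = v := by
  unfold along mkPoint; cases s.horiz <;> rfl

lemma ext_across_along (s : GridSeg) {p q : ℝ × ℝ} (h₁ : s.across p = s.across q)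
    (h₂ : s.along p = s.along q) : p = q := by
  unfold across at h₁
  unfold along at h₂
  split_ifs at h₁ h₂ <;> ext <;> assumption

lemma across_eq_of_horiz_eq (h : s.horiz = t.horiz) : s.across p = t.across p := by
  unfold across; rw [h]

lemma along_eq_of_horiz_eq (h : s.horiz = t.horiz) : s.along p = t.along p := by
  unfold along; rw [h]

lemma along_eq_across_of_horiz_ne (h : s.horiz ≠ t.horiz) : s.along p = t.across p := by
  unfold across along
  cases hs : s.horiz <;> cases ht : t.horiz <;> simp_all

lemma lo_lt_hi (s : GridSeg) : (s.lo : ℝ) < s.hi := by exact_mod_cast s.lt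

lemma mem_pts_iff :
    p ∈ s.pts ↔ s.across p = s.coord ∧ s.lo ≤ s.along p ∧ s.along p ≤ s.hi := by
  unfold pts across along; cases s.horiz <;> simp

lemma mem_interior_iff :
    p ∈ s.interior ↔ s.across p = s.coord ∧ s.lo < s.along p ∧ s.along p < s.hi := by
  unfold interior across along; cases s.horiz <;> simp

lemma mem_ends_iff :
    p ∈ s.ends ↔ s.across p = s.coord ∧ (s.along p = s.lo ∨ s.along p = s.hi) := by
  unfold ends across along
  cases s.horiz <;> simp [Prod.ext_iff] <;> tauto

lemma mem_ends_iff_exists_endpoint : p ∈ s.ends ↔ ∃ b, p = s.endpoint b := by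
  rw [mem_ends_iff]
  constructor
  · rintro ⟨h, hlo | hhi⟩
    · exact ⟨false, s.ext_across_along (by simp [endpoint, h]) (by simp [endpoint, hlo])⟩
    · exact ⟨true, s.ext_across_along (by simp [endpoint, h]) (by simp [endpoint, hhi])⟩
  · rintro ⟨b, rfl⟩
    cases b <;> simp [endpoint]

lemma mem_ends_of_mem_pts (hp : p ∈ s.pts) (hi : p ∉ s.interior) : p ∈ s.ends := by
  rw [mem_pts_iff] at hp
  rw [mem_interior_iff] at hi
  rw [mem_ends_iff]
  refine ⟨hp.1, ?_⟩
  by_contra h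
  exact hi ⟨hp.1, lt_of_le_of_ne hp.2.1 (fun e => h (Or.inl e.symm)),
    lt_of_le_of_ne hp.2.2 (fun e => h (Or.inr e))⟩

lemma interior_subset_pts (h : p ∈ s.interior) : p ∈ s.pts := by
  rw [mem_interior_iff] at h
  exact mem_pts_iff.mpr ⟨h.1, h.2.1.le, h.2.2.le⟩

lemma touch_of_mem_pts (hd : Disjoint s.interior t.interior) (hs : p ∈ s.pts) (ht : p ∈ t.pts) :
    s.Touch t := by
  by_cases h : p ∈ s.interior
  · exact ⟨p, hs, ht, Or.inr (mem_ends_of_mem_pts ht (Set.disjoint_left.mp hd h))⟩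
  · exact ⟨p, hs, ht, Or.inl (mem_ends_of_mem_pts hs h)⟩

lemma not_disjoint_interior_of_overlap (hdir : s.horiz = t.horiz) (hc : s.coord = t.coord)
    (h₁ : s.lo < t.hi) (h₂ : t.lo < s.hi) : ¬Disjoint s.interior t.interior := by
  have h₁' : (s.lo : ℝ) < t.hi := by exact_mod_cast h₁
  have h₂' : (t.lo : ℝ) < s.hi := by exact_mod_cast h₂
  have hs := s.lo_lt_hi
  have ht := t.lo_lt_hi
  have hlo := max_lt_iff.2 ⟨lt_min hs h₁', lt_min h₂' ht⟩
  rw [Set.not_disjoint_iff]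
  refine ⟨s.mkPoint s.coord ((max (s.lo : ℝ) t.lo + min (s.hi : ℝ) t.hi) / 2), ?_, ?_⟩
  · rw [mem_interior_iff]
    simp only [across_mkPoint, along_mkPoint, true_and]
    constructor <;> linarith [le_max_left (s.lo : ℝ) t.lo, min_le_left (s.hi : ℝ) t.hi]
  · rw [mem_interior_iff, ← across_eq_of_horiz_eq hdir, ← along_eq_of_horiz_eq hdir]
    simp only [across_mkPoint, along_mkPoint, hc, true_and]
    constructor <;> linarith [le_max_right (s.lo : ℝ) t.lo, min_le_right (s.hi : ℝ) t.hi]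

lemma mem_ends_of_horiz_eq (hdir : s.horiz = t.horiz) (hd : Disjoint s.interior t.interior)
    (hs : p ∈ s.pts) (ht : p ∈ t.pts) : p ∈ s.ends ∧ p ∈ t.ends := by
  rw [mem_pts_iff] at hs ht
  rw [mem_ends_iff, mem_ends_iff]
  have hc : s.coord = t.coord := by
    exact_mod_cast hs.1.symm.trans ((across_eq_of_horiz_eq hdir).trans ht.1)
  have hv : s.along p = t.along p := along_eq_of_horiz_eq hdir
  have hsep : t.hi ≤ s.lo ∨ s.hi ≤ t.lo := by
    by_contra! h
    exact not_disjoint_interior_of_overlap hdir hc h.1 h.2 hd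
  rcases hsep with h | h
  · have h' : (t.hi : ℝ) ≤ s.lo := by exact_mod_cast h
    exact ⟨⟨hs.1, Or.inl (by linarith)⟩, ⟨ht.1, Or.inr (by linarith)⟩⟩
  · have h' : (s.hi : ℝ) ≤ t.lo := by exact_mod_cast h
    exact ⟨⟨hs.1, Or.inr (by linarith)⟩, ⟨ht.1, Or.inl (by linarith)⟩⟩

lemma notMem_ends_of_mem_interior (h : p ∈ s.interior) : p ∉ s.ends := by
  rw [mem_interior_iff] at h
  rw [mem_ends_iff]
  rintro ⟨-, he | he⟩ <;> linarith [h.2.1, h.2.2]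

lemma horiz_ne_and_end_eq_coord_of_mem_interior (hd : Disjoint s.interior t.interior)
    (hs : p ∈ s.interior) (ht : p ∈ t.pts) :
    t.horiz ≠ s.horiz ∧ (t.lo = s.coord ∨ t.hi = s.coord) := by
  have hte : p ∈ t.ends := mem_ends_of_mem_pts ht (Set.disjoint_left.mp hd hs)
  have hdir : t.horiz ≠ s.horiz := fun h =>
    notMem_ends_of_mem_interior hs (mem_ends_of_horiz_eq h.symm hd (interior_subset_pts hs) ht).1
  have hv : t.along p = s.coord :=
    (along_eq_across_of_horiz_ne hdir).trans (mem_interior_iff.mp hs).1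
  rw [mem_ends_iff, hv] at hte
  exact ⟨hdir, by exact_mod_cast hte.2.imp Eq.symm Eq.symm⟩

/-- Three pairwise touching segments cannot all touch `s` in its interior: they would have to
be collinear, perpendicular to `s`, and end on the line of `s`, so two of them overlap. -/
lemma exists_endpoint_mem_of_triangle (m : Fin 3 → GridSeg)
    (hds : ∀ j, Disjoint s.interior (m j).interior)
    (hdm : Pairwise fun i j => Disjoint (m i).interior (m j).interior)
    (hts : ∀ j, s.Touch (m j)) (htm : Pairwise fun i j => (m i).Touch (m j)) :
    ∃ b j, s.endpoint b ∈ (m j).pts := by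
  by_contra hcon
  have hperp : ∀ j, (m j).horiz ≠ s.horiz ∧ ((m j).lo = s.coord ∨ (m j).hi = s.coord) := by
    intro j
    obtain ⟨p, hps, hpm, -⟩ := hts j
    refine horiz_ne_and_end_eq_coord_of_mem_interior (hds j) ?_ hpm
    by_contra hp
    obtain ⟨b, rfl⟩ := mem_ends_iff_exists_endpoint.mp (mem_ends_of_mem_pts hps hp)
    exact hcon ⟨b, j, hpm⟩
  obtain ⟨i, j, hij, hlo⟩ := Fintype.exists_ne_map_eq_of_card_lt
    (fun j => decide ((m j).lo = s.coord)) (by simp)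
  have hdir : (m i).horiz = (m j).horiz := by
    rw [Bool.eq_not_iff.mpr (hperp i).1, Bool.eq_not_iff.mpr (hperp j).1]
  have hc : (m i).coord = (m j).coord := by
    obtain ⟨q, hqi, hqj, -⟩ := htm hij
    exact_mod_cast (mem_pts_iff.mp hqi).1.symm.trans
      ((across_eq_of_horiz_eq hdir).trans (mem_pts_iff.mp hqj).1)
  simp only [decide_eq_decide] at hlo
  have := (m i).lt
  have := (m j).lt
  have := (hperp i).2
  have := (hperp j).2
  exact not_disjoint_interior_of_overlap hdir hc (by omega) (by omega) (hdm hij)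

end GridSeg

open Finset

section CycShift

variable {k : ℕ}

lemma cycShift_cycShift (i : Fin k) (a b : ℕ) :
    cycShift (cycShift i a) b = cycShift i (a + b) := by
  ext
  simp only [cycShift, Fin.val_add, Nat.add_mod_mod, Nat.mod_add_mod, Nat.add_assoc]

lemma cycShift_zero (i : Fin k) : cycShift i 0 = i := by
  ext
  simp [cycShift, Fin.val_add, Nat.mod_eq_of_lt i.isLt]

lemma cycShift_self (i : Fin k) : cycShift i k = i := by
  ext
  simp [cycShift, Fin.val_add, Nat.mod_eq_of_lt i.isLt]

lemma cycShift_ne_self (i : Fin k) {m : ℕ} (h₀ : 0 < m) (hm : m < k) : cycShift i m ≠ i := by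
  intro h
  have h' := congrArg Fin.val h
  simp only [cycShift, Fin.val_add, Nat.mod_eq_of_lt hm] at h'
  rcases lt_or_ge (i + m) k with hlt | hge
  · rw [Nat.mod_eq_of_lt hlt] at h'
    omega
  · rw [Nat.mod_eq_sub_mod hge, Nat.mod_eq_of_lt (by omega)] at h'
    omega

lemma cycShift_left_injective (m : ℕ) : Function.Injective fun i : Fin k => cycShift i m := by
  intro i j h
  exact add_right_cancel (h : i + _ = j + _)

lemma sum_range_cycShift [NeZero k] {M : Type*} [AddCommMonoid M] (g : Fin k → M) (i : Fin k) :
    ∑ m ∈ range k, g (cycShift i m) = ∑ j, g j := by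
  rw [← Fin.sum_univ_eq_sum_range (fun m => g (cycShift i m))]
  refine Fintype.sum_equiv (Equiv.addLeft i) _ _ fun j => congrArg g ?_
  ext
  simp [cycShift, Fin.val_add, Nat.mod_eq_of_lt j.isLt]

lemma exists_cycShift_eq_of_odd (hodd : Odd k) (p : Fin k → Bool) :
    ∃ i, p (cycShift i 1) = p i := by
  by_contra! h
  -- otherwise `· + 1` maps the `true` vertices onto the `false` ones, and `k` would be even
  have hcard : #{i | p i} = #{i | ¬p i} := by
    refine Finset.card_nbij' (cycShift · 1) (cycShift · (k - 1)) ?_ ?_ ?_ ?_ <;> intro i <;>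
      simp only [coe_filter, mem_univ, true_and, Set.mem_ofPred_eq]
    · intro hi
      simpa [hi] using h i
    · intro hi
      have := h (cycShift i (k - 1))
      rw [cycShift_cycShift, Nat.sub_add_cancel hodd.pos, cycShift_self] at this
      simpa [hi] using this.symm
    · intro
      rw [cycShift_cycShift, Nat.add_sub_cancel' hodd.pos, cycShift_self]
    · intro
      rw [cycShift_cycShift, Nat.sub_add_cancel hodd.pos, cycShift_self]
  have := card_filter_add_card_filter_not (s := univ) (fun i => p i = true)
  obtain ⟨m, hm⟩ := hodd
  simp only [card_univ, Fintype.card_fin] at this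
  omega

end CycShift

section Counting

variable {k : ℕ} (t : Fin k → ℕ)

/-- Split at every intermediate `2`; a block without one starts with a `2` and contains a single
`0`, all its other values being `≥ 1`. -/
lemma le_sum_range_cycShift_of_eq_two
    (hbetween : ∀ (i : Fin k) (d : ℕ), 0 < d → d ≤ k →
      t i = 2 → t (cycShift i d) = 2 →
      (∀ m, 0 < m → m < d → t (cycShift i m) ≠ 2) →
      ∃! m : ℕ, 0 < m ∧ m < d ∧ t (cycShift i m) = 0)
    (n : ℕ) (hn : n ≤ k) (i : Fin k) (hi : t i = 2) (hin : t (cycShift i n) = 2) :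
    n ≤ ∑ m ∈ range n, t (cycShift i m) := by
  induction n using Nat.strong_induction_on generalizing i with
  | _ n ih =>
  by_cases hmid : ∃ c, 0 < c ∧ c < n ∧ t (cycShift i c) = 2
  · obtain ⟨c, hc₀, hcn, hc⟩ := hmid
    have h₁ := ih c hcn (by omega) i hi hc
    have h₂ := ih (n - c) (by omega) (by omega) (cycShift i c) hc
      (by rwa [cycShift_cycShift, Nat.add_sub_cancel' hcn.le])
    simp only [cycShift_cycShift] at h₂
    rw [← Nat.add_sub_cancel' hcn.le, sum_range_add]
    omega
  rcases Nat.eq_zero_or_pos n with rfl | hn₀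
  · simp
  push Not at hmid
  obtain ⟨m₀, ⟨hm₀, hm₀n, -⟩, huniq⟩ :=
    hbetween i n hn₀ hn hi hin fun m h₀ h₁ => hmid m h₀ h₁
  have hle : ∀ m ∈ range n, 1 + (if m = 0 then 1 else 0) ≤
      t (cycShift i m) + (if m = m₀ then 1 else 0) := by
    intro m hm
    rw [mem_range] at hm
    by_cases h0 : m = 0
    · simp [h0, cycShift_zero, hi, hm₀.ne]
    by_cases hm0 : m = m₀
    · simp [hm0, hm₀.ne']
    have : t (cycShift i m) ≠ 0 := fun h => hm0 (huniq m ⟨by omega, hm, h⟩)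
    simp only [h0, hm0, if_false]
    omega
  have := sum_le_sum hle
  simp only [sum_add_distrib, sum_ite_eq', mem_range, hn₀, hm₀n, if_true, sum_const, card_range,
    smul_eq_mul, mul_one] at this
  omega

lemma le_sum_of_exists_eq_two
    (hbetween : ∀ (i : Fin k) (d : ℕ), 0 < d → d ≤ k →
      t i = 2 → t (cycShift i d) = 2 →
      (∀ m, 0 < m → m < d → t (cycShift i m) ≠ 2) →
      ∃! m : ℕ, 0 < m ∧ m < d ∧ t (cycShift i m) = 0)
    (h4 : ∃ i, t i = 2) : k ≤ ∑ i, t i := by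
  obtain ⟨i, hi⟩ := h4
  have : NeZero k := ⟨i.pos.ne'⟩
  rw [← sum_range_cycShift t i]
  exact le_sum_range_cycShift_of_eq_two t hbetween k le_rfl i hi (by rwa [cycShift_self])

end Counting

section CycleWithTriangles

variable {k : ℕ} {t : Fin k → ℕ}

@[simp] lemma cycleWithTriangles_adj_inl_inl {i j : Fin k} :
    (cycleWithTriangles k t).Adj (.inl i) (.inl j) ↔
      i ≠ j ∧ (i = cycShift j 1 ∨ j = cycShift i 1) := Iff.rfl

@[simp] lemma cycleWithTriangles_adj_inl_inr {i : Fin k} {x : Σ i : Fin k, Fin (t i) × Fin 3} :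
    (cycleWithTriangles k t).Adj (.inl i) (.inr x) ↔ i = x.1 := Iff.rfl

@[simp] lemma cycleWithTriangles_adj_inr_inl {i : Fin k} {x : Σ i : Fin k, Fin (t i) × Fin 3} :
    (cycleWithTriangles k t).Adj (.inr x) (.inl i) ↔ i = x.1 := Iff.rfl

@[simp] lemma cycleWithTriangles_adj_inr_inr {x y : Σ i : Fin k, Fin (t i) × Fin 3} :
    (cycleWithTriangles k t).Adj (.inr x) (.inr y) ↔
      x.1 = y.1 ∧ x.2.1.1 = y.2.1.1 ∧ x.2.2 ≠ y.2.2 := Iff.rfl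

lemma cycleWithTriangles_not_adj_cycShift_two (hk : 4 ≤ k) (i : Fin k) :
    ¬(cycleWithTriangles k t).Adj (.inl i) (.inl (cycShift i 2)) := by
  rw [cycleWithTriangles_adj_inl_inl, cycShift_cycShift]
  rintro ⟨-, h | h⟩
  · exact cycShift_ne_self i (m := 3) (by norm_num) (by omega) h.symm
  · exact cycShift_ne_self (cycShift i 1) (m := 1) one_pos (by omega)
      ((cycShift_cycShift i 1 1).trans h)

end CycleWithTriangles

section Representation

variable {V : Type*} {G : SimpleGraph V} {f : V → GridSeg}

lemma IsB0Rep.touch (hf : IsB0Rep G f) {v w : V} (h : G.Adj v w) : (f v).Touch (f w) :=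
  (hf.2 v w h.ne).mp h

lemma IsB0Rep.eq_or_adj_of_mem_pts (hf : IsB0Rep G f) {v w : V} {p : ℝ × ℝ}
    (hv : p ∈ (f v).pts) (hw : p ∈ (f w).pts) : v = w ∨ G.Adj v w := by
  by_cases h : v = w
  · exact Or.inl h
  · exact Or.inr ((hf.2 v w h).mpr (GridSeg.touch_of_mem_pts (hf.1 v w h) hv hw))

end Representation

section Contacts

variable {k : ℕ}

open Classical in
noncomputable def forwardContacts (s : Fin k → GridSeg) : Finset (Fin k) :=
  {e | ∃ b, (s e).endpoint b ∈ (s (cycShift e 1)).pts}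

open Classical in
noncomputable def backwardContacts (s : Fin k → GridSeg) : Finset (Fin k) :=
  {e | ∃ b, (s (cycShift e 1)).endpoint b ∈ (s e).pts}

lemma succ_le_card_forwardContacts_add_card_backwardContacts (hodd : Odd k)
    (s : Fin k → GridSeg) (hd : ∀ e, Disjoint (s e).interior (s (cycShift e 1)).interior)
    (ht : ∀ e, (s e).Touch (s (cycShift e 1))) :
    k + 1 ≤ #(forwardContacts s) + #(backwardContacts s) := by
  have hunion : forwardContacts s ∪ backwardContacts s = univ := by
    refine eq_univ_of_forall fun e => ?_
    obtain ⟨p, hp, hp', hend⟩ := ht e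
    simp only [forwardContacts, backwardContacts, mem_union, mem_filter, mem_univ, true_and]
    rcases hend with h | h <;> obtain ⟨b, rfl⟩ := GridSeg.mem_ends_iff_exists_endpoint.mp h
    exacts [Or.inl ⟨b, hp'⟩, Or.inr ⟨b, hp⟩]
  obtain ⟨e, he⟩ := exists_cycShift_eq_of_odd hodd fun e => (s e).horiz
  have hinter : e ∈ forwardContacts s ∩ backwardContacts s := by
    obtain ⟨p, hp, hp', -⟩ := ht e
    obtain ⟨h, h'⟩ := GridSeg.mem_ends_of_horiz_eq he.symm (hd e) hp hp'
    obtain ⟨b, rfl⟩ := GridSeg.mem_ends_iff_exists_endpoint.mp h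
    obtain ⟨b', hb'⟩ := GridSeg.mem_ends_iff_exists_endpoint.mp h'
    simp only [forwardContacts, backwardContacts, mem_inter, mem_filter, mem_univ, true_and]
    exact ⟨⟨b, hp'⟩, ⟨b', hb' ▸ hp⟩⟩
  have hcard := card_union_add_card_inter (forwardContacts s) (backwardContacts s)
  rw [hunion, card_univ, Fintype.card_fin] at hcard
  have := card_pos.mpr ⟨e, hinter⟩
  omega

end Contacts

section Claims

variable {k : ℕ} {t : Fin k → ℕ} {F B : Finset (Fin k)}

/-- The claimants of endpoints of cycle segments: the triangles, and the cycle edges in `F` and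
in `B`, which claim an endpoint of their first and of their second vertex respectively. -/
abbrev Claimant (t : Fin k → ℕ) (F B : Finset (Fin k)) : Type := (Σ i, Fin (t i)) ⊕ (F ⊕ B)

def Claimant.vertex : Claimant t F B → Fin k
  | .inl ⟨i, _⟩ => i
  | .inr (.inl e) => e
  | .inr (.inr e) => cycShift e 1

/-- The neighbour of `v_c.vertex` whose segment contains the claimed endpoint, `x i a` being the
relevant vertex of the triangle `a` at `v_i`. -/
def Claimant.partner (x : ∀ i, Fin (t i) → Fin 3) :
    Claimant t F B → Fin k ⊕ (Σ i : Fin k, Fin (t i) × Fin 3)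
  | .inl ⟨i, a⟩ => .inr ⟨i, a, x i a⟩
  | .inr (.inl e) => .inl (cycShift e 1)
  | .inr (.inr e) => .inl e

lemma Claimant.eq_of_vertex_eq (hk : 4 ≤ k) (x : ∀ i, Fin (t i) → Fin 3)
    {c c' : Claimant t F B} (hv : c.vertex = c'.vertex)
    (hp : c.partner x = c'.partner x ∨
      (cycleWithTriangles k t).Adj (c.partner x) (c'.partner x)) :
    c = c' := by
  have hne (i : Fin k) : cycShift i 1 ≠ i := cycShift_ne_self i one_pos (by omega)
  have hfb (e e' : Fin k) (he : e = cycShift e' 1) :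
      ¬(Sum.inl (cycShift e 1) = (Sum.inl e' : Fin k ⊕ (Σ i : Fin k, Fin (t i) × Fin 3)) ∨
        (cycleWithTriangles k t).Adj (.inl (cycShift e 1)) (.inl e')) := by
    rw [he, cycShift_cycShift]
    rintro (h | h)
    · exact cycShift_ne_self e' (m := 2) two_pos (by omega) (Sum.inl_injective h)
    · exact cycleWithTriangles_not_adj_cycShift_two hk e' h.symm
  rcases c with ⟨i, a⟩ | e | e <;> rcases c' with ⟨i', a'⟩ | e' | e' <;>
    simp only [vertex, partner] at hv hp
  · subst hv
    obtain rfl : a = a' := by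
      simp only [Sum.inr.injEq, Sigma.mk.injEq, heq_eq_eq, Prod.mk.injEq, true_and,
        cycleWithTriangles_adj_inr_inr, ne_eq] at hp
      exact hp.elim (·.1) (Fin.ext ·.1)
    rfl
  all_goals try simp only [reduceCtorEq, false_or, cycleWithTriangles_adj_inl_inr,
    cycleWithTriangles_adj_inr_inl] at hp
  · exact absurd (hp.trans hv) (hne e')
  · exact absurd (hv.symm.trans hp.symm) (hne e')
  · exact absurd (hp.trans hv.symm) (hne e)
  · rw [Subtype.ext hv]
  · exact absurd hp (hfb e e' hv)
  · exact absurd (hv.trans hp.symm) (hne e)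
  · exact absurd (hp.imp Eq.symm SimpleGraph.Adj.symm) (hfb e' e hv.symm)
  · rw [Subtype.ext (cycShift_left_injective 1 hv)]

variable {f : Fin k ⊕ (Σ i : Fin k, Fin (t i) × Fin 3) → GridSeg}

lemma exists_endpoint_mem_triangle (hf : IsB0Rep (cycleWithTriangles k t) f) (i : Fin k)
    (a : Fin (t i)) : ∃ b x, (f (.inl i)).endpoint b ∈ (f (.inr ⟨i, a, x⟩)).pts :=
  GridSeg.exists_endpoint_mem_of_triangle (fun x => f (.inr ⟨i, a, x⟩))
    (fun _ => hf.1 _ _ Sum.inl_ne_inr) (fun x y hxy => hf.1 _ _ (by simpa using hxy))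
    (fun _ => hf.touch (by simp)) (fun x y hxy => hf.touch (by simpa using hxy))

/-- Two claimants of the same endpoint of the segment of `v_i` have segments through that point,
so they are equal or adjacent neighbours of `v_i`, which only happens inside one triangle. -/
lemma card_forwardContacts_add_card_backwardContacts_add_sum_le (hk : 4 ≤ k)
    (hf : IsB0Rep (cycleWithTriangles k t) f) :
    #(forwardContacts (f ∘ .inl)) + #(backwardContacts (f ∘ .inl)) + ∑ i, t i ≤ 2 * k := by
  set F := forwardContacts (f ∘ .inl)
  set B := backwardContacts (f ∘ .inl)
  choose bT xT hT using exists_endpoint_mem_triangle hf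
  have hF (e : F) : ∃ b, (f (.inl e)).endpoint b ∈ (f (.inl (cycShift e 1))).pts := by
    simpa [F, forwardContacts] using e.2
  have hB (e : B) : ∃ b, (f (.inl (cycShift e 1))).endpoint b ∈ (f (.inl e)).pts := by
    simpa [B, backwardContacts] using e.2
  choose bF hF using hF
  choose bB hB using hB
  let b : Claimant t F B → Bool
    | .inl ⟨i, a⟩ => bT i a
    | .inr (.inl e) => bF e
    | .inr (.inr e) => bB e
  have hmem (c : Claimant t F B) :
      (f (.inl c.vertex)).endpoint (b c) ∈ (f (c.partner xT)).pts := by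
    rcases c with ⟨i, a⟩ | e | e
    exacts [hT i a, hF e, hB e]
  have hinj : Function.Injective fun c => (c.vertex, b c) := fun c c' h => by
    obtain ⟨hv, hb⟩ := Prod.mk.inj h
    refine Claimant.eq_of_vertex_eq hk xT hv (hf.eq_or_adj_of_mem_pts (hmem c) ?_)
    rw [hv, hb]
    exact hmem c'
  have := Fintype.card_le_of_injective _ hinj
  simp only [Fintype.card_sum, Fintype.card_sigma, Fintype.card_fin, Fintype.card_prod,
    Fintype.card_bool, Fintype.card_coe] at this
  omega

end Claims

theorem F4_not_contactB0VPG_general (k : ℕ) (hk : 5 ≤ k) (hodd : Odd k) (t : Fin k → ℕ)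
    (h4 : ∃ i, t i = 2)
    (hbetween : ∀ (i : Fin k) (d : ℕ), 0 < d → d ≤ k →
      t i = 2 → t (cycShift i d) = 2 →
      (∀ m, 0 < m → m < d → t (cycShift i m) ≠ 2) →
      ∃! m : ℕ, 0 < m ∧ m < d ∧ t (cycShift i m) = 0) :
    ¬ ContactB0VPG (cycleWithTriangles k t) := by
  rintro ⟨f, hf⟩
  have hadj (e : Fin k) : (cycleWithTriangles k t).Adj (.inl e) (.inl (cycShift e 1)) :=
    ⟨(cycShift_ne_self e one_pos (by omega)).symm, Or.inr rfl⟩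
  have hcontacts := succ_le_card_forwardContacts_add_card_backwardContacts hodd (f ∘ .inl)
    (fun e => hf.1 _ _ (hadj e).ne) (fun e => hf.touch (hadj e))
  have hclaims := card_forwardContacts_add_card_backwardContacts_add_sum_le (by omega) hf
  have hsum := le_sum_of_exists_eq_two t hbetween h4
  omega

/-- family `F₄`: let `G` be an odd cycle `v_1 … v_k` where vertex `v_i`
carries `t i ∈ {0, 1, 2}` attached triangles (Type 0, Type 1 and Type 4 respectively),
with at least one Type-4 vertex, and such that between every pair of consecutive Type-4
vertices along the cycle there is exactly one Type-0 vertex (all remaining vertices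
being of Type 1).  Then `G` is not contact B₀-VPG. -/
theorem F4_not_contactB0VPG (k : ℕ) (hk : 5 ≤ k) (hodd : Odd k) (t : Fin k → ℕ)
    (ht : ∀ i, t i = 0 ∨ t i = 1 ∨ t i = 2)
    (h4 : ∃ i, t i = 2)
    (hbetween : ∀ (i : Fin k) (d : ℕ), 0 < d → d ≤ k →
      t i = 2 → t (cycShift i d) = 2 →
      (∀ m, 0 < m → m < d → t (cycShift i m) ≠ 2) →
      ∃! m : ℕ, 0 < m ∧ m < d ∧ t (cycShift i m) = 0) :
    ¬ ContactB0VPG (cycleWithTriangles k t) :=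
  F4_not_contactB0VPG_general k hk hodd t h4 hbetween
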